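/- Let K be a field, E a finite-dimensional K-vector space, N ≥ 1 and r ≥ 1 integers, and R a subspace of E^⊗N. If R ⊗ E^⊗r ⊆ E^⊗r ⊗ R as subspaces of E^⊗(N+r) (under the canonical associativity identifications), then R = 0 or R = E^⊗N. -/

import Mathlib

open TensorProduct

variable (K : Type*) [Field K] (E : Type*) [AddCommGroup E] [Module K E]

/-- The subspace `R ⊗ E^⊗r` of `E^⊗(N+r)`: the image of the canonical map
`R ⊗ E^⊗r → E^⊗N ⊗ E^⊗r ≅ E^⊗(N+r)` induced by the inclusion of `R`. -/
noncomputable def subRight {N : ℕ} (R : Submodule K (⨂[K]^N E)) (r : ℕ) :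
    Submodule K (⨂[K]^(N + r) E) :=
  LinearMap.range ((TensorPower.mulEquiv (n := N) (m := r)).toLinearMap
    ∘ₗ LinearMap.rTensor (⨂[K]^r E) R.subtype)

/-- The subspace `E^⊗r ⊗ R` of `E^⊗(N+r)`: the image of the canonical map
`E^⊗r ⊗ R → E^⊗r ⊗ E^⊗N ≅ E^⊗(r+N) ≅ E^⊗(N+r)` induced by the inclusion of `R`. -/
noncomputable def subLeft {N : ℕ} (R : Submodule K (⨂[K]^N E)) (r : ℕ) :
    Submodule K (⨂[K]^(N + r) E) :=
  LinearMap.range ((TensorPower.cast K E (add_comm r N)).toLinearMap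
    ∘ₗ (TensorPower.mulEquiv (n := r) (m := N)).toLinearMap
    ∘ₗ LinearMap.lTensor (⨂[K]^r E) R.subtype)

namespace Statement11Aux

open PiTensorProduct DirectSum

noncomputable def lofn (n : ℕ) : ⨂[K]^n E →ₗ[K] ⨁ n : ℕ, ⨂[K]^n E :=
  DirectSum.lof K ℕ (fun n => ⨂[K]^n E) n

theorem lofn_injective (n : ℕ) : Function.Injective (lofn K E n) := by
  intro a b hab
  apply DirectSum.of_injective (β := fun n => ⨂[K]^n E) n
  rwa [← DirectSum.lof_eq_of K, ← DirectSum.lof_eq_of K]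

theorem lofn_mul {i j : ℕ} (a : ⨂[K]^i E) (b : ⨂[K]^j E) :
    lofn K E (i + j) (TensorPower.mulEquiv (a ⊗ₜ[K] b)) = lofn K E i a * lofn K E j b := by
  rw [lofn, lofn, lofn, DirectSum.lof_eq_of, DirectSum.lof_eq_of, DirectSum.lof_eq_of,
    DirectSum.of_mul_of]
  rfl

theorem lofn_cast {i j : ℕ} (h : i = j) (a : ⨂[K]^i E) :
    lofn K E j (TensorPower.cast K E h a) = lofn K E i a := by
  subst h
  rw [TensorPower.cast_refl]
  rfl

noncomputable def MM (n : ℕ) : Submodule K (⨁ n : ℕ, ⨂[K]^n E) :=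
  LinearMap.range (lofn K E n)

theorem MM_congr {i j : ℕ} (h : i = j) : MM K E i = MM K E j := by subst h; rfl

theorem MM_mul (i j : ℕ) : MM K E i * MM K E j = MM K E (i + j) := by
  apply le_antisymm
  · rw [Submodule.mul_le]
    rintro _ ⟨a, rfl⟩ _ ⟨b, rfl⟩
    exact ⟨TensorPower.mulEquiv (a ⊗ₜ b), lofn_mul K E a b⟩
  · rintro _ ⟨z, rfl⟩
    obtain ⟨t, rfl⟩ := (TensorPower.mulEquiv (n := i) (m := j)).surjective z
    induction t with
    | zero => simp
    | tmul a b =>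
        rw [lofn_mul]
        exact Submodule.mul_mem_mul ⟨a, rfl⟩ ⟨b, rfl⟩
    | add x y hx hy =>
        rw [map_add, map_add]
        exact add_mem hx hy

theorem map_subRight {N : ℕ} (R : Submodule K (⨂[K]^N E)) (r : ℕ) :
    (subRight K E R r).map (lofn K E (N + r)) = R.map (lofn K E N) * MM K E r := by
  apply le_antisymm
  · rintro _ ⟨_, ⟨t, rfl⟩, rfl⟩
    induction t with
    | zero => simp
    | tmul a b =>
        obtain ⟨x, hx⟩ := a
        simp only [LinearMap.coe_comp, Function.comp_apply, LinearMap.rTensor_tmul,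
          Submodule.coe_subtype, LinearEquiv.coe_coe]
        rw [lofn_mul]
        exact Submodule.mul_mem_mul ⟨x, hx, rfl⟩ ⟨b, rfl⟩
    | add x y hx hy =>
        rw [map_add, map_add]
        exact add_mem hx hy
  · rw [Submodule.mul_le]
    rintro _ ⟨x, hx, rfl⟩ _ ⟨y, rfl⟩
    refine ⟨TensorPower.mulEquiv (x ⊗ₜ y), ⟨(⟨x, hx⟩ : R) ⊗ₜ y, rfl⟩, lofn_mul K E x y⟩

theorem map_subLeft {N : ℕ} (R : Submodule K (⨂[K]^N E)) (r : ℕ) :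
    (subLeft K E R r).map (lofn K E (N + r)) = MM K E r * R.map (lofn K E N) := by
  apply le_antisymm
  · rintro _ ⟨_, ⟨t, rfl⟩, rfl⟩
    induction t with
    | zero => simp
    | tmul a b =>
        obtain ⟨x, hx⟩ := b
        simp only [LinearMap.coe_comp, Function.comp_apply, LinearMap.lTensor_tmul,
          Submodule.coe_subtype, LinearEquiv.coe_coe]
        rw [lofn_cast, lofn_mul]
        exact Submodule.mul_mem_mul ⟨a, rfl⟩ ⟨x, hx, rfl⟩
    | add x y hx hy =>
        rw [map_add, map_add]
        exact add_mem hx hy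
  · rw [Submodule.mul_le]
    rintro _ ⟨y, rfl⟩ _ ⟨x, hx, rfl⟩
    refine ⟨TensorPower.cast K E (add_comm r N) (TensorPower.mulEquiv (y ⊗ₜ x)),
      ⟨y ⊗ₜ (⟨x, hx⟩ : R), rfl⟩, ?_⟩
    rw [lofn_cast, lofn_mul]

theorem comm_mul {S M1 M2 : Submodule K (⨁ n : ℕ, ⨂[K]^n E)}
    (h1 : S * M1 ≤ M1 * S) (h2 : S * M2 ≤ M2 * S) : S * (M1 * M2) ≤ (M1 * M2) * S :=
  calc S * (M1 * M2) = (S * M1) * M2 := (mul_assoc _ _ _).symm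
    _ ≤ (M1 * S) * M2 := mul_le_mul_left h1 _
    _ = M1 * (S * M2) := mul_assoc _ _ _
    _ ≤ M1 * (M2 * S) := mul_le_mul_right h2 _
    _ = (M1 * M2) * S := (mul_assoc _ _ _).symm

end Statement11Aux

open Statement11Aux PiTensorProduct DirectSum

/-- Let `K` be a field, `E` a finite-dimensional `K`-vector space,
`N ≥ 1` and `r ≥ 1` integers, and `R ⊆ E^⊗N` a subspace.  If `R ⊗ E^⊗r ⊆ E^⊗r ⊗ R` as
subspaces of `E^⊗(N+r)`, then `R = 0` or `R = E^⊗N`. -/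
theorem statement11 [FiniteDimensional K E] (N r : ℕ) (hN : 1 ≤ N) (hr : 1 ≤ r)
    (R : Submodule K (⨂[K]^N E))
    (h : subRight K E R r ≤ subLeft K E R r) :
    R = ⊥ ∨ R = ⊤ := by
  classical
  rcases subsingleton_or_nontrivial E with hE | hE
  · left
    have hz : ∀ z : ⨂[K]^N E, z = 0 := by
      intro z
      induction z using PiTensorProduct.induction_on with
      | smul_tprod c f =>
          have h0 : f ⟨0, hN⟩ = 0 := Subsingleton.elim _ _
          rw [MultilinearMap.map_coord_zero _ (⟨0, hN⟩ : Fin N) h0, smul_zero]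
      | add x y hx hy => rw [hx, hy, add_zero]
    rw [Submodule.eq_bot_iff]
    intro z _
    exact hz z
  by_cases hbot : R = ⊥
  · exact Or.inl hbot
  right
  obtain ⟨x, hxR, hx0⟩ := Submodule.ne_bot_iff R |>.mp hbot
  -- base commutation in the big graded ring
  set RA : Submodule K (⨁ n : ℕ, ⨂[K]^n E) := R.map (lofn K E N) with hRA
  have h1 : RA * MM K E r ≤ MM K E r * RA := by
    rw [← map_subRight, ← map_subLeft]
    exact Submodule.map_mono h
  have hk : ∀ k : ℕ, RA * MM K E (r * (k + 1)) ≤ MM K E (r * (k + 1)) * RA := by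
    intro k
    induction k with
    | zero => rw [MM_congr K E (show r * (0 + 1) = r by ring)]; exact h1
    | succ k ih =>
        have e1 : MM K E (r * (k + 1 + 1)) = MM K E (r * (k + 1)) * MM K E r := by
          rw [MM_mul]
          exact MM_congr K E (by ring)
        rw [e1]
        exact comm_mul K E ih h1
  set t : ℕ := r * N - N with ht
  have hrN : r * N = N + t := by
    have : N ≤ r * N := Nat.le_mul_of_pos_left N hr
    omega
  have hcomm : RA * MM K E (N + t) ≤ MM K E (N + t) * RA := by
    have h2 := hk (N - 1)
    rw [show N - 1 + 1 = N by omega] at h2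
    rwa [MM_congr K E hrN] at h2
  -- dual functionals
  obtain ⟨e, he⟩ := exists_ne (0 : E)
  have hφ : ¬ ∀ φ : Module.Dual K E, φ e = 0 := by
    rw [Module.forall_dual_apply_eq_zero_iff]; exact he
  push_neg at hφ
  obtain ⟨φ₀, hφ₀⟩ := hφ
  set φ : Module.Dual K E := (φ₀ e)⁻¹ • φ₀ with hφdef
  have hφe : φ e = 1 := by
    simp [hφdef, inv_mul_cancel₀ hφ₀]
  have hg : ¬ ∀ g : Module.Dual K (⨂[K]^N E), g x = 0 := by
    rw [Module.forall_dual_apply_eq_zero_iff]; exact hx0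
  push_neg at hg
  obtain ⟨g₀, hg₀⟩ := hg
  set g : Module.Dual K (⨂[K]^N E) := (g₀ x)⁻¹ • g₀ with hgdef
  have hgx : g x = 1 := by
    simp [hgdef, inv_mul_cancel₀ hg₀]
  set h' : Module.Dual K (⨂[K]^t E) :=
    PiTensorProduct.lift ((MultilinearMap.mkPiAlgebra K (Fin t) K).compLinearMap fun _ => φ)
    with hh'def
  set u : ⨂[K]^t E := tprod K (fun _ : Fin t => e) with hu
  have hh'u : h' u = 1 := by
    simp [hh'def, hu, hφe]
  -- the contraction map
  set F : Module.Dual K (⨂[K]^(N + t) E) :=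
    (TensorProduct.lift (g.smulRight h')) ∘ₗ
      (TensorPower.mulEquiv (n := N) (m := t)).symm.toLinearMap with hFdef
  have hF : ∀ (a : ⨂[K]^N E) (b : ⨂[K]^t E),
      F (TensorPower.mulEquiv (a ⊗ₜ b)) = g a * h' b := by
    intro a b
    simp [hFdef]
  set C : ⨂[K]^((N + t) + N) E →ₗ[K] ⨂[K]^N E :=
    (TensorProduct.lift ((LinearMap.lsmul K (⨂[K]^N E)).comp F)) ∘ₗ
      (TensorPower.mulEquiv (n := N + t) (m := N)).symm.toLinearMap with hCdef
  have hC : ∀ (w : ⨂[K]^(N + t) E) (v : ⨂[K]^N E),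
      C (TensorPower.mulEquiv (w ⊗ₜ v)) = F w • v := by
    intro w v
    simp [hCdef]
  set P : Submodule K (⨁ n : ℕ, ⨂[K]^n E) :=
    (R.comap C).map (lofn K E ((N + t) + N)) with hP
  have hMP : MM K E (N + t) * RA ≤ P := by
    rw [Submodule.mul_le]
    rintro _ ⟨z, rfl⟩ _ ⟨y, hyR, rfl⟩
    rw [← lofn_mul]
    refine ⟨TensorPower.mulEquiv (z ⊗ₜ y), ?_, rfl⟩
    have : C (TensorPower.mulEquiv (z ⊗ₜ y)) ∈ R := by
      rw [hC]; exact Submodule.smul_mem _ _ hyR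
    exact this
  -- finish
  rw [Submodule.eq_top_iff']
  intro v
  have hbc : lofn K E t u * lofn K E N v ∈ MM K E (N + t) := by
    rw [← lofn_mul]
    exact (MM_congr K E (add_comm t N)) ▸ ⟨TensorPower.mulEquiv (u ⊗ₜ v), rfl⟩
  have habc : lofn K E N x * (lofn K E t u * lofn K E N v) ∈ P := by
    refine hMP (hcomm (Submodule.mul_mem_mul ?_ hbc))
    exact ⟨x, hxR, rfl⟩
  have heq : lofn K E N x * (lofn K E t u * lofn K E N v)
      = lofn K E ((N + t) + N) (TensorPower.mulEquiv ((TensorPower.mulEquiv (x ⊗ₜ u)) ⊗ₜ v)) := by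
    rw [lofn_mul, lofn_mul, mul_assoc]
  rw [heq] at habc
  obtain ⟨w, hw, hweq⟩ := habc
  have : w = TensorPower.mulEquiv ((TensorPower.mulEquiv (x ⊗ₜ u)) ⊗ₜ v) :=
    lofn_injective K E _ hweq
  rw [this] at hw
  have hw2 : C (TensorPower.mulEquiv ((TensorPower.mulEquiv (x ⊗ₜ u)) ⊗ₜ v)) ∈ R := hw
  rw [hC, hF, hgx, hh'u] at hw2
  simpa using hw2
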